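/- Let i, j ∈ Z_n with n ≥ 3. The number of quandle endomorphisms φ of the dihedral quandle Z_n with φ(i) = j is exactly n. -/
import Mathlib

private lemma dihedral_hom_affine {n : ℕ} [NeZero n] (φ : ZMod n → ZMod n)
    (h : ∀ x y : ZMod n, φ (2 * y - x) = 2 * φ y - φ x) (x : ZMod n) :
    φ x = (φ 1 - φ 0) * x + φ 0 := by
  obtain ⟨m, rfl⟩ := ZMod.natCast_zmod_surjective (n := n) x
  set a := φ 1 - φ 0 with ha
  set c := φ 0 with hc
  suffices H : ∀ m : ℕ, φ (m : ZMod n) = a * m + c ∧ φ ((m + 1 : ℕ) : ZMod n) = a * (m + 1 : ℕ) + c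
    from (H m).1
  intro m
  induction m with
  | zero => constructor <;> push_cast <;> [skip; rw [ha, hc]] <;> ring
  | succ k ih =>
    refine ⟨ih.2, ?_⟩
    have key := h (k : ZMod n) ((k + 1 : ℕ) : ZMod n)
    have cast_eq : (2 : ZMod n) * ((k + 1 : ℕ) : ZMod n) - (k : ZMod n) = ((k + 1 + 1 : ℕ) : ZMod n) := by
      push_cast; ring
    rw [cast_eq, ih.1, ih.2] at key
    rw [key]; push_cast; ring

/-- For `n ≥ 3` and `i j ∈ ZMod n`, exactly `n` quandle endomorphisms `φ` of the
dihedral quandle `ZMod n` satisfy `φ(i) = j`. -/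
theorem dihedral_hom_fiber_card (n : ℕ) (hn : 3 ≤ n) [NeZero n] (i j : ZMod n) :
    Fintype.card {φ : ZMod n → ZMod n //
        (∀ x y : ZMod n, φ (2 * y - x) = 2 * φ y - φ x) ∧ φ i = j} = n := by
  have e : {φ : ZMod n → ZMod n //
      (∀ x y : ZMod n, φ (2 * y - x) = 2 * φ y - φ x) ∧ φ i = j} ≃ ZMod n :=
    { toFun := fun φ => φ.1 (i + 1) - j
      invFun := fun a => ⟨fun x => a * (x - i) + j, fun x y => by ring, by ring_nf⟩
      left_inv := by
        rintro ⟨φ, hφ, hij⟩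
        ext x
        simp only
        have h1 := dihedral_hom_affine φ hφ (i + 1)
        have h2 := dihedral_hom_affine φ hφ i
        have h3 := dihedral_hom_affine φ hφ x
        rw [h2] at hij
        rw [h1, h3]
        linear_combination (x - i - 1) * hij
      right_inv := fun a => by simp only; ring }
  rw [Fintype.card_congr e, ZMod.card]
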